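/- For every subset I = {i_1<⋯<i_r} ⊆ {0,…,n−1}: y_{i_1} y_{i_2} ⋯ y_{i_r} · y_∅ = (−1)^{i_1+i_2+⋯+i_r} · y_I in Cl(V,Q), where y_∅ = y_{\bar{0}} y_{\bar{1}} ⋯ y_{\overline{n−1}} · y. -/

import Mathlib

open scoped BigOperators

noncomputable section

variable (F : Type*) [Field F] [CharZero F]

/-- The bilinear form on `V = F^{2n}` (with coordinates indexed by `Fin n ⊕ Fin n`,
where `Sum.inl i` is the "barred" index `ī` and `Sum.inr i` is the index `i`) given by
`B(u,v) = ∑_i u_ī v_i`. -/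
noncomputable def Bform (n : ℕ) :
    LinearMap.BilinMap F ((Fin n ⊕ Fin n) → F) F :=
  LinearMap.mk₂ F (fun u v => ∑ i : Fin n, u (Sum.inl i) * v (Sum.inr i))
    (fun u u' v => by simp [add_mul, Finset.sum_add_distrib])
    (fun c u v => by simp [Finset.mul_sum, mul_assoc])
    (fun u v v' => by simp [mul_add, Finset.sum_add_distrib])
    (fun c u v => by simp [Finset.mul_sum]; ring_nf; simp [mul_assoc, mul_comm, mul_left_comm])

/-- The quadratic form `Q(v) = ∑_{i=0}^{n−1} v_ī v_i` on `V = F^{2n}`.  The associated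
Clifford algebra satisfies `y_ī y_i + y_i y_ī = 1`, `y_i y_j = −y_j y_i` for `j ≠ ī`,
and `y_i² = y_ī² = 0`. -/
noncomputable def Qform (n : ℕ) : QuadraticForm F ((Fin n ⊕ Fin n) → F) :=
  (Bform F n).toQuadraticMap

/-- `y_ī`, the image in the Clifford algebra of the barred basis vector. -/
noncomputable def yb {n : ℕ} (i : Fin n) : CliffordAlgebra (Qform F n) :=
  CliffordAlgebra.ι (Qform F n) (Pi.single (Sum.inl i) 1)

/-- `y_i`, the image in the Clifford algebra of the unbarred basis vector. -/
noncomputable def yp {n : ℕ} (i : Fin n) : CliffordAlgebra (Qform F n) :=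
  CliffordAlgebra.ι (Qform F n) (Pi.single (Sum.inr i) 1)

/-- `y = y_0 y_1 ⋯ y_{n−1}`. -/
noncomputable def yE (n : ℕ) : CliffordAlgebra (Qform F n) :=
  (List.ofFn fun i : Fin n => yp F i).prod

/-- The standard spinor `y_I = y_{ī'_1} ⋯ y_{ī'_{n−r}} · y`, where
`I' = {i'_1 < ⋯ < i'_{n−r}}` is the complement of `I` in `{0,…,n−1}`. -/
noncomputable def spinor {n : ℕ} (I : Finset (Fin n)) : CliffordAlgebra (Qform F n) :=
  ((Iᶜ.sort (· ≤ ·)).map fun i => yb F i).prod * yE F n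

end

/-! Left multiplication by `y_i` acts on a word `y_{j̄_1} ⋯ y_{j̄_k} · y` like a contraction:
`y_i` anticommutes with every `y_j̄` for `j ≠ i`, turns `y_i y_ī` into `1 - y_ī y_i`, and
annihilates `y`. So only the factor `y_ī` is removed, with the sign of its position:
for `i ∉ J`, `y_i · y_J = (-1)^{#{j ∉ J | j < i}} y_{J ∪ {i}}`. Building `y_I` from `y_∅` by
adding the elements of `I` from the largest to the smallest, every index below the one being
added is still barred, so adding `i` contributes exactly `(-1)^i`. -/

open Finset

section Anticommute

variable {R : Type*} [Ring R]

theorem mul_list_prod_of_anticomm (x : R) (l : List R) (h : ∀ y ∈ l, x * y = -(y * x)) :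
    x * l.prod = ((-1 : ℤ) ^ l.length) • (l.prod * x) := by
  induction l with
  | nil => simp
  | cons a t ih =>
    rw [List.prod_cons, ← mul_assoc, h a List.mem_cons_self, neg_mul, mul_assoc,
      ih fun y hy => h y (List.mem_cons_of_mem a hy), mul_smul_comm, List.length_cons, pow_succ,
      mul_neg_one, neg_smul, mul_assoc]

theorem mul_list_prod_eq_zero_of_anticomm {x : R} {l : List R} (hx : x ∈ l)
    (h : ∀ y ∈ l, x * y = -(y * x)) (hsq : x * x = 0) : x * l.prod = 0 := by
  obtain ⟨s, t, rfl⟩ := List.append_of_mem hx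
  rw [List.prod_append, ← mul_assoc, mul_list_prod_of_anticomm x s fun y hy => h y (by simp [hy]),
    List.prod_cons, smul_mul_assoc, mul_assoc, ← mul_assoc x, hsq, zero_mul, mul_zero, smul_zero]

theorem mul_list_prod_map_mul_eq_erase {ι : Type*} [DecidableEq ι] {x z : R} {f : ι → R}
    {i : ι} (hne : ∀ j ≠ i, x * f j = -(f j * x)) (hi : x * f i = 1 - f i * x)
    (hz : x * z = 0) {l : List ι} (hl : l.Nodup) (hil : i ∈ l) :
    x * ((l.map f).prod * z) = ((-1 : ℤ) ^ l.idxOf i) • (((l.erase i).map f).prod * z) := by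
  induction l with
  | nil => simp at hil
  | cons a t ih =>
    obtain ⟨hat, ht⟩ := List.nodup_cons.1 hl
    rw [List.map_cons, List.prod_cons, mul_assoc, ← mul_assoc x]
    by_cases ha : a = i
    · subst ha
      have hkill : x * ((t.map f).prod * z) = 0 := by
        rw [← mul_assoc, mul_list_prod_of_anticomm x _ ?_, smul_mul_assoc, mul_assoc, hz,
          mul_zero, smul_zero]
        simp only [List.mem_map]
        rintro _ ⟨j, hj, rfl⟩
        exact hne j (ne_of_mem_of_not_mem hj hat)
      rw [hi, sub_mul, one_mul, mul_assoc, hkill, mul_zero, sub_zero, List.idxOf_cons_self,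
        List.erase_cons_head, pow_zero, one_smul]
    · rw [hne a ha, neg_mul, mul_assoc, ih ht ((List.mem_cons.1 hil).resolve_left (Ne.symm ha)),
        List.idxOf_cons_ne t ha, List.erase_cons_tail (by simpa using ha), List.map_cons,
        List.prod_cons, mul_smul_comm, pow_succ, mul_neg_one, neg_smul, mul_assoc]

end Anticommute

section Sorting

variable {α : Type*} [LinearOrder α]

theorem List.Pairwise.idxOf_eq_countP_lt {l : List α} (hl : l.Pairwise (· < ·)) {a : α}
    (ha : a ∈ l) : l.idxOf a = l.countP (· < a) := by
  induction l with
  | nil => simp at ha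
  | cons b t ih =>
    obtain ⟨hbt, ht⟩ := List.pairwise_cons.1 hl
    by_cases hb : b = a
    · subst hb
      rw [List.idxOf_cons_self, List.countP_cons_of_neg (by simp), eq_comm, List.countP_eq_zero]
      simpa using fun c hc => (hbt c hc).le
    · have hat : a ∈ t := (List.mem_cons.1 ha).resolve_left (Ne.symm hb)
      rw [List.idxOf_cons_ne t hb, ih ht hat, List.countP_cons_of_pos (by simpa using hbt a hat)]

theorem Finset.idxOf_sort {s : Finset α} {a : α} (ha : a ∈ s) :
    s.sort.idxOf a = #{x ∈ s | x < a} := by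
  rw [(sortedLT_sort s).pairwise.idxOf_eq_countP_lt ((mem_sort _).2 ha), card_def, filter_val,
    ← Multiset.countP_eq_card_filter, ← sort_eq s (· ≤ ·), Multiset.coe_countP]

theorem Finset.sort_erase (s : Finset α) (a : α) : (s.erase a).sort = s.sort.erase a :=
  (sortedLT_sort _).eq_of_mem_iff ((sortedLT_sort s).pairwise.erase a).sortedLT fun b => by
    rw [mem_sort, mem_erase, (sort_nodup s _).mem_erase_iff, mem_sort]

end Sorting

section Spinor

variable {F : Type*} [Field F] {n : ℕ}

theorem Qform_single (a : Fin n ⊕ Fin n) : Qform F n (Pi.single a 1) = 0 := by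
  cases a <;> simp [Qform, Bform, Pi.single_apply]

theorem polar_Qform_single (a b : Fin n ⊕ Fin n) :
    QuadraticMap.polar (Qform F n) (Pi.single a 1) (Pi.single b 1) =
      if a = b.swap then 1 else 0 := by
  rw [Qform, LinearMap.BilinMap.polar_toQuadraticMap]
  cases a <;> cases b <;> simp [Bform, Pi.single_apply, eq_comm]

theorem yp_mul_yb_add_yb_mul_yp (i j : Fin n) :
    yp F i * yb F j + yb F j * yp F i = if i = j then 1 else 0 := by
  rw [yp, yb, CliffordAlgebra.ι_mul_ι_add_swap, polar_Qform_single]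
  split_ifs <;> simp_all

theorem yp_mul_yp (i j : Fin n) : yp F i * yp F j = -(yp F j * yp F i) := by
  refine eq_neg_of_add_eq_zero_left ?_
  rw [yp, yp, CliffordAlgebra.ι_mul_ι_add_swap, polar_Qform_single]
  simp

theorem yp_mul_yE (i : Fin n) : yp F i * yE F n = 0 := by
  refine mul_list_prod_eq_zero_of_anticomm (List.mem_ofFn.2 ⟨i, rfl⟩) ?_ ?_
  · rintro _ hy
    obtain ⟨j, rfl⟩ := List.mem_ofFn.1 hy
    exact yp_mul_yp i j
  · rw [yp, CliffordAlgebra.ι_sq_scalar, Qform_single, map_zero]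

theorem yp_mul_spinor {J : Finset (Fin n)} {i : Fin n} (hi : i ∉ J) :
    yp F i * spinor F J = ((-1 : F) ^ #{j ∈ Jᶜ | j < i}) • spinor F (insert i J) := by
  have hne (j) (hj : j ≠ i) : yp F i * yb F j = -(yb F j * yp F i) :=
    eq_neg_of_add_eq_zero_left (by simp [yp_mul_yb_add_yb_mul_yp, Ne.symm hj])
  have hii : yp F i * yb F i = 1 - yb F i * yp F i :=
    eq_sub_of_add_eq (by simp [yp_mul_yb_add_yb_mul_yp])
  have hiJ : i ∈ Jᶜ := mem_compl.2 hi
  rw [spinor, spinor, compl_insert, sort_erase, mul_list_prod_map_mul_eq_erase hne hii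
    (yp_mul_yE i) (sort_nodup _ _) ((mem_sort _).2 hiJ), idxOf_sort hiJ,
    ← Int.cast_smul_eq_zsmul F]
  push_cast
  rfl

end Spinor

variable (F : Type*) [Field F] [CharZero F]

/-- For every subset `I = {i_1<⋯<i_r} ⊆ {0,…,n−1}`:
`y_{i_1} y_{i_2} ⋯ y_{i_r} · y_∅ = (−1)^{i_1+⋯+i_r} · y_I` in `Cl(V,Q)`, where
`y_∅ = y_{0̄} y_{1̄} ⋯ y_{\overline{n−1}} · y`. -/
theorem spinor_alt_basis (n : ℕ) (I : Finset (Fin n)) :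
    ((I.sort (· ≤ ·)).map fun i => yp F i).prod * spinor F (∅ : Finset (Fin n)) =
      ((-1 : F) ^ (∑ i ∈ I, (i : ℕ))) • spinor F I := by
  induction I using Finset.induction_on_min with
  | empty => simp
  | insert i J hlt ih =>
    have hiJ : i ∉ J := fun h => lt_irrefl i (hlt i h)
    have hcount : #{j ∈ Jᶜ | j < i} = i := by
      rw [← Fin.card_Iio]
      congr 1
      ext j
      simpa using fun hji hj => (hlt j hj).asymm hji
    rw [sort_insert _ (fun j hj => (hlt j hj).le) hiJ, List.map_cons, List.prod_cons, mul_assoc,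
      ih, mul_smul_comm, yp_mul_spinor hiJ, hcount, smul_smul, ← pow_add, sum_insert hiJ,
      add_comm]
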